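/- Let E be a finite nonempty type, let P be an irreducible stochastic matrix on E, let π be an invariant probability vector of P, and fix a state α ∈ E. Then there exists a unique E×E real matrix K satisfying (I − P) K = I − e π^T and K(α, j) = 0 for all j ∈ E; moreover, for any E×E real matrix X̃ satisfying (I − P) X̃ = I − e π^T, one has K(i,j) = X̃(i,j) − X̃(α,j) for all i, j ∈ E. -/

import Mathlib

/-!
Every column of a solution of `(I - P) X = I - e πᵀ` is determined up to an additive constant,
because by the maximum principle the only `P`-harmonic vectors of an irreducible stochastic `P`
are the constant ones; normalising row `α` to zero removes the constant. A solution exists: the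
fundamental matrix `Z = (I - P + e πᵀ)⁻¹` is one, invertibility again coming from the fact that a
vector killed by `I - P + e πᵀ` is harmonic and orthogonal to `π`.
-/

open Matrix

namespace Matrix

variable {E : Type*} [Fintype E] [DecidableEq E] {P : Matrix E E ℝ}

theorem pow_mulVec_eq_self {R : Type*} [Semiring R] {M : Matrix E E R} {v : E → R}
    (hv : M *ᵥ v = v) (n : ℕ) : (M ^ n) *ᵥ v = v := by
  induction n with
  | zero => exact one_mulVec v
  | succ n ih => rw [pow_succ, ← mulVec_mulVec, hv, ih]

theorem apply_eq_of_mulVec_eq_self_of_isMax (hP : P ∈ rowStochastic ℝ E) {v : E → ℝ}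
    (hv : P *ᵥ v = v) {i j : E} (hmax : ∀ k, v k ≤ v i) (hij : 0 < P i j) : v j = v i := by
  have hsum : ∑ k, P i k * (v i - v k) = 0 := by
    have hvi : ∑ k, P i k * v k = v i := congrFun hv i
    simp only [mul_sub, Finset.sum_sub_distrib, ← Finset.sum_mul, hvi,
      sum_row_of_mem_rowStochastic hP, one_mul, sub_self]
  have hterm := (Finset.sum_eq_zero_iff_of_nonneg fun k _ =>
    mul_nonneg (nonneg_of_mem_rowStochastic hP) (sub_nonneg.2 (hmax k))).1 hsum j
    (Finset.mem_univ j)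
  linarith [(mul_eq_zero.1 hterm).resolve_left hij.ne']

theorem apply_eq_of_mulVec_eq_self (hP : P ∈ rowStochastic ℝ E)
    (hirr : P.IsIrreducible) {v : E → ℝ} (hv : P *ᵥ v = v) (i j : E) :
    v i = v j := by
  have : Nonempty E := ⟨i⟩
  obtain ⟨m, hm⟩ := Finite.exists_max v
  have hconst : ∀ k, v k = v m := fun k => by
    obtain ⟨n, -, hn⟩ := (isIrreducible_iff_exists_pow_pos hirr.nonneg).1 hirr m k
    exact apply_eq_of_mulVec_eq_self_of_isMax (pow_mem hP n) (pow_mulVec_eq_self hv n) hm hn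
  rw [hconst i, hconst j]

theorem sub_apply_eq_of_one_sub_mul_eq (hP : P ∈ rowStochastic ℝ E)
    (hirr : P.IsIrreducible) {K X : Matrix E E ℝ} (h : (1 - P) * K = (1 - P) * X)
    (i k j : E) : K i j - X i j = K k j - X k j := by
  have hPD : P * (K - X) = K - X := by
    have h0 : (1 - P) * (K - X) = 0 := by rw [mul_sub, h, sub_self]
    rw [sub_mul, one_mul, sub_eq_zero] at h0
    exact h0.symm
  refine apply_eq_of_mulVec_eq_self hP hirr (v := fun i => (K - X) i j) ?_ i k
  ext i
  simpa [mul_apply, mulVec, dotProduct] using congrFun (congrFun hPD i) j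

theorem one_sub_mul_sub_vecMulVec (hP : P ∈ rowStochastic ℝ E) (X : Matrix E E ℝ) (v : E → ℝ) :
    (1 - P) * (X - vecMulVec 1 v) = (1 - P) * X := by
  rw [mul_sub, mul_vecMulVec, sub_mulVec, one_mulVec, one_vecMul_of_mem_rowStochastic hP,
    sub_self, zero_vecMulVec, sub_zero]

noncomputable def fundamentalMatrix (P : Matrix E E ℝ) (π : E → ℝ) : Matrix E E ℝ :=
  (1 - P + vecMulVec 1 π)⁻¹

variable {π : E → ℝ}

theorem vecMul_one_sub_add_vecMulVec (hπ1 : ∑ i, π i = 1) (hπP : π ᵥ* P = π) :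
    π ᵥ* (1 - P + vecMulVec 1 π) = π := by
  have hπe : π ⬝ᵥ 1 = 1 := by simpa [dotProduct] using hπ1
  rw [vecMul_add, vecMul_sub, vecMul_one, hπP, vecMul_vecMulVec, hπe, one_smul, sub_self,
    zero_add]

theorem eq_zero_of_one_sub_add_vecMulVec_mulVec_eq_zero (hP : P ∈ rowStochastic ℝ E)
    (hirr : P.IsIrreducible) (hπ1 : ∑ i, π i = 1) (hπP : π ᵥ* P = π) {w : E → ℝ}
    (hw : (1 - P + vecMulVec 1 π) *ᵥ w = 0) : w = 0 := by
  have hπw : π ⬝ᵥ w = 0 := by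
    rw [← vecMul_one_sub_add_vecMulVec hπ1 hπP, ← dotProduct_mulVec, hw, dotProduct_zero]
  have hPw : P *ᵥ w = w := by
    rw [add_mulVec, sub_mulVec, one_mulVec, vecMulVec_mulVec, hπw] at hw
    simpa [sub_eq_zero, eq_comm] using hw
  ext i
  calc w i = ∑ k, π k * w i := by rw [← Finset.sum_mul, hπ1, one_mul]
    _ = π ⬝ᵥ w := Finset.sum_congr rfl fun k _ => by
      rw [apply_eq_of_mulVec_eq_self hP hirr hPw i k]
    _ = 0 := hπw

theorem isUnit_det_one_sub_add_vecMulVec (hP : P ∈ rowStochastic ℝ E)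
    (hirr : P.IsIrreducible) (hπ1 : ∑ i, π i = 1) (hπP : π ᵥ* P = π) :
    IsUnit (1 - P + vecMulVec 1 π).det := by
  rw [← isUnit_iff_isUnit_det, ← mulVec_injective_iff_isUnit]
  intro x y hxy
  exact sub_eq_zero.1 (eq_zero_of_one_sub_add_vecMulVec_mulVec_eq_zero hP hirr hπ1 hπP
    (by rw [mulVec_sub, hxy, sub_self]))

theorem one_sub_mul_fundamentalMatrix (hP : P ∈ rowStochastic ℝ E)
    (hirr : P.IsIrreducible) (hπ1 : ∑ i, π i = 1) (hπP : π ᵥ* P = π) :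
    (1 - P) * fundamentalMatrix P π = 1 - vecMulVec 1 π := by
  set Q : Matrix E E ℝ := vecMulVec 1 π
  have hA := isUnit_det_one_sub_add_vecMulVec hP hirr hπ1 hπP
  have hQA : Q * (1 - P + Q) = Q := by
    rw [vecMulVec_mul, vecMul_one_sub_add_vecMulVec hπ1 hπP]
  have hQAinv : Q * (1 - P + Q)⁻¹ = Q := by
    calc Q * (1 - P + Q)⁻¹ = Q * (1 - P + Q) * (1 - P + Q)⁻¹ := by rw [hQA]
      _ = Q := mul_nonsing_inv_cancel_right _ _ hA
  calc (1 - P) * (1 - P + Q)⁻¹ = (1 - P + Q - Q) * (1 - P + Q)⁻¹ := by rw [add_sub_cancel_right]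
    _ = 1 - Q := by
      rw [sub_mul, mul_nonsing_inv _ hA, hQAinv]

end Matrix

theorem stmt16_general {E : Type*} [Fintype E] [DecidableEq E]
    (P : Matrix E E ℝ)
    (hP0 : ∀ i j, 0 ≤ P i j) (hP1 : ∀ i, ∑ j, P i j = 1)
    (hirr : ∀ i j, ∃ n, 1 ≤ n ∧ 0 < (P ^ n) i j)
    (π : E → ℝ) (hπ1 : ∑ i, π i = 1)
    (hπP : π ᵥ* P = π)
    (α : E) :
    (∃! K : Matrix E E ℝ,
      (1 - P) * K = 1 - Matrix.vecMulVec (fun _ => (1 : ℝ)) π ∧ ∀ j, K α j = 0) ∧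
    ∀ K : Matrix E E ℝ,
      ((1 - P) * K = 1 - Matrix.vecMulVec (fun _ => (1 : ℝ)) π ∧ ∀ j, K α j = 0) →
      ∀ X : Matrix E E ℝ, (1 - P) * X = 1 - Matrix.vecMulVec (fun _ => (1 : ℝ)) π →
      ∀ i j, K i j = X i j - X α j := by
  have hP : P ∈ rowStochastic ℝ E := mem_rowStochastic_iff_sum.2 ⟨hP0, hP1⟩
  have hPirr : P.IsIrreducible :=
    (isIrreducible_iff_exists_pow_pos hP0).2 fun i j => (hirr i j).imp fun _ => id
  have compare : ∀ K : Matrix E E ℝ,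
      ((1 - P) * K = 1 - vecMulVec 1 π ∧ ∀ j, K α j = 0) →
      ∀ X : Matrix E E ℝ, (1 - P) * X = 1 - vecMulVec 1 π → ∀ i j, K i j = X i j - X α j := by
    rintro K ⟨hK, hKα⟩ X hX i j
    have := sub_apply_eq_of_one_sub_mul_eq hP hPirr (hK.trans hX.symm) i α j
    rw [hKα] at this
    linarith
  set Z := fundamentalMatrix P π
  have hZ : (1 - P) * Z = 1 - vecMulVec 1 π := one_sub_mul_fundamentalMatrix hP hPirr hπ1 hπP
  set K₀ := Z - vecMulVec 1 (Z α)
  have hK₀ : (1 - P) * K₀ = 1 - vecMulVec 1 π ∧ ∀ j, K₀ α j = 0 :=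
    ⟨(one_sub_mul_sub_vecMulVec hP Z (Z α)).trans hZ, fun j => by simp [K₀]⟩
  refine ⟨⟨K₀, hK₀, fun K hK => ?_⟩, compare⟩
  ext i j
  rw [compare K hK K₀ hK₀.1 i j, hK₀.2 j, sub_zero]

theorem stmt16 {E : Type*} [Fintype E] [Nonempty E] [DecidableEq E]
    (P : Matrix E E ℝ)
    (hP0 : ∀ i j, 0 ≤ P i j) (hP1 : ∀ i, ∑ j, P i j = 1)
    (hirr : ∀ i j, ∃ n, 1 ≤ n ∧ 0 < (P ^ n) i j)
    (π : E → ℝ) (hπ0 : ∀ i, 0 ≤ π i) (hπ1 : ∑ i, π i = 1)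
    (hπP : π ᵥ* P = π)
    (α : E) :
    (∃! K : Matrix E E ℝ,
      (1 - P) * K = 1 - Matrix.vecMulVec (fun _ => (1 : ℝ)) π ∧ ∀ j, K α j = 0) ∧
    ∀ K : Matrix E E ℝ,
      ((1 - P) * K = 1 - Matrix.vecMulVec (fun _ => (1 : ℝ)) π ∧ ∀ j, K α j = 0) →
      ∀ X : Matrix E E ℝ, (1 - P) * X = 1 - Matrix.vecMulVec (fun _ => (1 : ℝ)) π →
      ∀ i j, K i j = X i j - X α j :=
  stmt16_general P hP0 hP1 hirr π hπ1 hπP α
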